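/- arXiv:2105.12893 — 2 statements merged into one kernel-verified Lean document; each statement's English description precedes it below -/
import Mathlib

section
/- Let θ₁,…,θ_m ∈ Θ be candidate parameters, let X₁,…,X_N be an i.i.d. sample from the distribution with CDF F^{θ₀}, and for each i let Y₁^{θ_i},…,Y_n^{θ_i} be an i.i.d. sample from the distribution with CDF F^{θ_i}, with F_N^{θ₀} and F_n^{θ_i} the corresponding empirical distribution functions. Define the two-sample eligibility set 𝓔̂_m^v = { θ_i : sup_{x∈ℝ} |F_n^{θ_i}(x) − F_N^{θ₀}(x)| ≤ √((n+N)/(nN)) · √(−(1/2)log(α/2)) }. For any ε, ε₁, ε₂ > 0 with ε₁ + ε₂ < ε, if nN/(n+N) > (−(1/2)log(α/2)) / (ε − ε₁ − ε₂)², then ℙ( ∃ i ∈ {1,…,m} such that sup_{x∈ℝ} |F^{θ_i}(x) − F^{θ₀}(x)| > ε and θ_i ∈ 𝓔̂_m^v ) ≤ 2m( e^{−2nε₁²} + e^{−2Nε₂²} ). -/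
open MeasureTheory ProbabilityTheory Filter

noncomputable def ecdfFin {Ω : Type*} {M : ℕ} (Z : Fin M → Ω → ℝ) (ω : Ω) (x : ℝ) : ℝ :=
  (M : ℝ)⁻¹ * ∑ i, if Z i ω ≤ x then (1 : ℝ) else 0

/-!
If `θᵢ` is more than `ε` away from `θ₀` in Kolmogorov–Smirnov distance, fix, before looking at
the data, a point `xᵢ` with `|F^{θᵢ}(xᵢ) - F^{θ₀}(xᵢ)| > ε`. The sample-size condition makes the
eligibility threshold smaller than `ε - ε₁ - ε₂`, so if `θᵢ` is eligible the triangle inequality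
at `xᵢ` forces the simulated empirical CDF to miss `F^{θᵢ}(xᵢ)` by more than `ε₁` or the observed
one to miss `F^{θ₀}(xᵢ)` by more than `ε₂`. Since `xᵢ` is deterministic, Hoeffding's inequality
for the sum of the indicators `1{Z ≤ xᵢ}` bounds these events by `2e^{-2nε₁²}` and `2e^{-2Nε₂²}`,
and a union bound over the `m` candidates concludes.
-/

open Set Real
open scoped NNReal

lemma ecdfFin_mem_Icc {Ω : Type*} {M : ℕ} (Z : Fin M → Ω → ℝ) (ω : Ω) (x : ℝ) :
    ecdfFin Z ω x ∈ Icc (0 : ℝ) 1 := by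
  have hle : (∑ i, if Z i ω ≤ x then (1 : ℝ) else 0) ≤ M := by
    calc _ ≤ ∑ _i : Fin M, (1 : ℝ) := Finset.sum_le_sum fun i _ => by split_ifs <;> norm_num
      _ = M := by simp
  exact ⟨by unfold ecdfFin; positivity, inv_mul_le_one_of_le₀ hle M.cast_nonneg⟩

lemma bddAbove_range_abs_ecdfFin_sub {Ω : Type*} {M M' : ℕ} (Z : Fin M → Ω → ℝ)
    (Z' : Fin M' → Ω → ℝ) (ω : Ω) :
    BddAbove (range fun x => |ecdfFin Z ω x - ecdfFin Z' ω x|) := by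
  refine ⟨1, forall_mem_range.2 fun x => ?_⟩
  obtain ⟨h₀, h₁⟩ := ecdfFin_mem_Icc Z ω x
  obtain ⟨h₀', h₁'⟩ := ecdfFin_mem_Icc Z' ω x
  exact abs_sub_le_of_nonneg_of_le h₀ h₁ h₀' h₁'

lemma ecdfFin_sub_eq_inv_mul_sum {Ω : Type*} {M : ℕ} (hM : 0 < M) (Z : Fin M → Ω → ℝ)
    (ω : Ω) (x p : ℝ) :
    ecdfFin Z ω x - p = (M : ℝ)⁻¹ * ∑ i, ((if Z i ω ≤ x then (1 : ℝ) else 0) - p) := by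
  have : (M : ℝ) ≠ 0 := by positivity
  rw [Finset.sum_sub_distrib, ecdfFin]
  simp only [Finset.sum_boole, Finset.sum_const, Finset.card_univ, Fintype.card_fin, nsmul_eq_mul]
  field_simp

section Hoeffding

variable {Ω : Type*} [MeasurableSpace Ω] {P : Measure Ω}

lemma ProbabilityTheory.HasSubgaussianMGF.measure_abs_ge_le [IsFiniteMeasure P] {X : Ω → ℝ}
    {c : ℝ≥0} (h : HasSubgaussianMGF X c P) {ε : ℝ} (hε : 0 ≤ ε) :
    P.real {ω | ε ≤ |X ω|} ≤ 2 * exp (-ε ^ 2 / (2 * c)) := by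
  have hsub : {ω | ε ≤ |X ω|} ⊆ {ω | ε ≤ X ω} ∪ {ω | ε ≤ (-X) ω} := fun ω hω => by
    simpa only [mem_union, mem_ofPred_eq, Pi.neg_apply, ← le_abs] using hω
  calc P.real {ω | ε ≤ |X ω|} ≤ P.real {ω | ε ≤ X ω} + P.real {ω | ε ≤ (-X) ω} :=
        (measureReal_mono hsub).trans (measureReal_union_le _ _)
    _ ≤ exp (-ε ^ 2 / (2 * c)) + exp (-ε ^ 2 / (2 * c)) :=
        add_le_add (h.measure_ge_le hε) (h.neg.measure_ge_le hε)
    _ = 2 * exp (-ε ^ 2 / (2 * c)) := by ring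

lemma hasSubgaussianMGF_indicator_sub [IsProbabilityMeasure P] {Z : Ω → ℝ} (hZ : Measurable Z)
    (x : ℝ) :
    HasSubgaussianMGF (fun ω => (if Z ω ≤ x then (1 : ℝ) else 0) - P.real (Z ⁻¹' Iic x))
      (1 / 4) P := by
  have hm : Measurable fun ω => if Z ω ≤ x then (1 : ℝ) else 0 :=
    Measurable.ite (hZ measurableSet_Iic) measurable_const measurable_const
  have hmean : P[fun ω => if Z ω ≤ x then (1 : ℝ) else 0] = P.real (Z ⁻¹' Iic x) := by
    rw [← integral_indicator_one (hZ measurableSet_Iic)]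
    congr with ω
  have := hasSubgaussianMGF_of_mem_Icc (μ := P) (a := 0) (b := 1) hm.aemeasurable
    (ae_of_all _ fun ω => by split_ifs <;> norm_num)
  rw [hmean] at this
  convert this using 1
  norm_num

lemma measure_abs_ecdfFin_sub_gt_le {M : ℕ} (hM : 0 < M) {Z : Fin M → Ω → ℝ}
    (hZm : ∀ j, Measurable (Z j)) (hind : iIndepFun Z P) {ρ : Measure ℝ}
    (hZρ : ∀ j, P.map (Z j) = ρ) (x : ℝ) {δ : ℝ} (hδ : 0 ≤ δ) :
    P.real {ω | δ < |ecdfFin Z ω x - ρ.real (Iic x)|} ≤ 2 * exp (-2 * M * δ ^ 2) := by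
  have := hind.isProbabilityMeasure
  have hρ j : ρ.real (Iic x) = P.real (Z j ⁻¹' Iic x) := by
    rw [← hZρ j, map_measureReal_apply (hZm j) measurableSet_Iic]
  have hsum := HasSubgaussianMGF.sum_of_iIndepFun (s := Finset.univ)
    (hind.comp _ fun j => (measurable_const.ite measurableSet_Iic measurable_const).sub_const
      (ρ.real (Iic x)))
    fun j _ => hρ j ▸ hasSubgaussianMGF_indicator_sub (hZm j) x
  have hMpos : (0 : ℝ) < M := by exact_mod_cast hM
  have hsub : {ω | δ < |ecdfFin Z ω x - ρ.real (Iic x)|} ⊆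
      {ω | M * δ ≤ |∑ j, ((if Z j ω ≤ x then (1 : ℝ) else 0) - ρ.real (Iic x))|} := by
    intro ω hω
    rw [mem_ofPred_eq, ecdfFin_sub_eq_inv_mul_sum hM, abs_mul, abs_inv, Nat.abs_cast,
      lt_inv_mul_iff₀ hMpos] at hω
    exact hω.le
  refine (measureReal_mono hsub).trans ((hsum.measure_abs_ge_le (by positivity)).trans_eq ?_)
  simp only [one_div, Finset.sum_const, Finset.card_univ, Fintype.card_fin, nsmul_eq_mul,
    NNReal.coe_mul, NNReal.coe_natCast, NNReal.coe_inv, NNReal.coe_ofNat]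
  congr 2
  field_simp
  ring

end Hoeffding

lemma exists_imp_lt_of_lt_ciSup {ι α : Type*} [Nonempty ι] [ConditionallyCompleteLinearOrder α]
    (f : ι → α) (a : α) : ∃ i, a < ⨆ i, f i → a < f i := by
  by_cases h : a < ⨆ i, f i
  · exact (exists_lt_of_lt_ciSup h).imp fun _ hi _ => hi
  · exact (‹Nonempty ι›.map fun i => ⟨i, fun h' => (h h').elim⟩).some

lemma sqrt_inv_mul_sqrt_lt {a c E : ℝ} (hE : 0 < E) (h : c / E ^ 2 < a) : √a⁻¹ * √c < E := by
  rcases le_or_gt a 0 with ha | ha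
  · rwa [sqrt_eq_zero'.2 (inv_nonpos.2 ha), zero_mul]
  rw [← sqrt_mul (inv_nonneg.2 ha.le), sqrt_lt' hE, inv_mul_lt_iff₀ ha]
  rwa [div_lt_iff₀ (by positivity)] at h

lemma lt_abs_sub_or_lt_abs_sub {a b c d ε₁ ε₂ η : ℝ} (hab : ε₁ + η + ε₂ < |a - b|)
    (hcd : |c - d| ≤ η) : ε₁ < |c - a| ∨ ε₂ < |d - b| := by
  by_contra! h
  have := abs_sub_le a c b
  have := abs_sub_le c d b
  rw [abs_sub_comm] at h
  linarith [h.1, h.2]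

theorem stmt_9_general
    {Ω : Type*} [MeasurableSpace Ω] (Pr : Measure Ω) [IsProbabilityMeasure Pr]
    (μ : Measure ℝ)
    {N n m : ℕ} (hN0 : 0 < N) (hn0 : 0 < n)
    (ν : Fin m → Measure ℝ)
    (X : Fin N → Ω → ℝ) (Y : Fin m → Fin n → Ω → ℝ)
    (hXm : ∀ i, Measurable (X i)) (hYm : ∀ i j, Measurable (Y i j))
    (hindep : iIndepFun
      (Sum.elim X (fun p : Fin m × Fin n => Y p.1 p.2)) Pr)
    (hX : ∀ k, Measure.map (X k) Pr = μ) (hY : ∀ i j, Measure.map (Y i j) Pr = ν i)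
    (α : ℝ)
    (ε ε₁ ε₂ : ℝ) (hε₁ : 0 < ε₁) (hε₂ : 0 < ε₂) (hεsum : ε₁ + ε₂ < ε)
    (hNlarge : ((n : ℝ) * N) / ((n : ℝ) + N) >
      (-(1 / 2) * Real.log (α / 2)) / (ε - ε₁ - ε₂) ^ 2) :
    (Pr {ω | ∃ i : Fin m,
        ε < (⨆ x : ℝ, |(ν i (Set.Iic x)).toReal - (μ (Set.Iic x)).toReal|) ∧
        (⨆ x : ℝ, |ecdfFin (Y i) ω x - ecdfFin X ω x|) ≤
          Real.sqrt (((n : ℝ) + N) / ((n : ℝ) * N)) *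
            Real.sqrt (-(1 / 2) * Real.log (α / 2))}).toReal
      ≤ 2 * m * (Real.exp (-2 * n * ε₁ ^ 2) + Real.exp (-2 * N * ε₂ ^ 2)) := by
  have hthr : √((n + N) / (n * N)) * √(-(1 / 2) * log (α / 2)) < ε - ε₁ - ε₂ := by
    simpa only [inv_div] using sqrt_inv_mul_sqrt_lt (by linarith) hNlarge
  choose x hx using fun i =>
    exists_imp_lt_of_lt_ciSup (fun x => |(ν i).real (Iic x) - μ.real (Iic x)|) ε
  let A i := {ω | ε₁ < |ecdfFin (Y i) ω (x i) - (ν i).real (Iic (x i))|}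
  let B i := {ω | ε₂ < |ecdfFin X ω (x i) - μ.real (Iic (x i))|}
  have hA i : Pr.real (A i) ≤ 2 * exp (-2 * n * ε₁ ^ 2) :=
    measure_abs_ecdfFin_sub_gt_le hn0 (hYm i)
      (hindep.precomp (Sum.inr_injective.comp (Prod.mk_right_injective i)) :) (hY i)
      (x i) hε₁.le
  have hB i : Pr.real (B i) ≤ 2 * exp (-2 * N * ε₂ ^ 2) :=
    measure_abs_ecdfFin_sub_gt_le hN0 hXm (hindep.precomp Sum.inl_injective :) hX (x i) hε₂.le
  calc Pr.real _ ≤ Pr.real (⋃ i, A i ∪ B i) := by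
        refine measureReal_mono fun ω ⟨i, hfar, heligible⟩ => mem_iUnion.2 ⟨i, ?_⟩
        exact lt_abs_sub_or_lt_abs_sub (by linarith [hx i hfar])
          (le_ciSup (bddAbove_range_abs_ecdfFin_sub (Y i) X ω) (x i))
    _ ≤ ∑ i, (Pr.real (A i) + Pr.real (B i)) :=
      (measureReal_iUnion_fintype_le _).trans
        (Finset.sum_le_sum fun i _ => measureReal_union_le _ _)
    _ ≤ ∑ _i : Fin m, (2 * exp (-2 * n * ε₁ ^ 2) + 2 * exp (-2 * N * ε₂ ^ 2)) :=
      Finset.sum_le_sum fun i _ => add_le_add (hA i) (hB i)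
    _ = 2 * m * (exp (-2 * n * ε₁ ^ 2) + exp (-2 * N * ε₂ ^ 2)) := by
      simp only [Finset.sum_const, Finset.card_univ, Fintype.card_fin, nsmul_eq_mul]
      ring

/-- **Theorem 3 (Type II error guarantee for the eligibility-set algorithm).**
With candidates `θ₁,…,θ_m`, real data of size `N` from `F^{θ₀}` and simulated samples of
size `n` from each `F^{θᵢ}`, the probability that some candidate whose output CDF is more
than `ε` away (in KS distance) from the truth lies in the eligibility set
`𝓔̂_m^v = {θᵢ : sup_x |F_n^{θᵢ}(x) - F_N^{θ₀}(x)| ≤ √((n+N)/(nN))·√(-½ log(α/2))}` is at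
most `2m(e^{-2nε₁²} + e^{-2Nε₂²})` (two-sample variant). -/
theorem stmt_9
    {Ω : Type*} [MeasurableSpace Ω] (Pr : Measure Ω) [IsProbabilityMeasure Pr]
    (μ : Measure ℝ) [IsProbabilityMeasure μ]
    {N n m : ℕ} (hN0 : 0 < N) (hn0 : 0 < n)
    (ν : Fin m → Measure ℝ) [∀ i, IsProbabilityMeasure (ν i)]
    (X : Fin N → Ω → ℝ) (Y : Fin m → Fin n → Ω → ℝ)
    (hXm : ∀ i, Measurable (X i)) (hYm : ∀ i j, Measurable (Y i j))
    (hindep : iIndepFun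
      (Sum.elim X (fun p : Fin m × Fin n => Y p.1 p.2)) Pr)
    (hX : ∀ k, Measure.map (X k) Pr = μ) (hY : ∀ i j, Measure.map (Y i j) Pr = ν i)
    (α : ℝ) (hα : α ∈ Set.Ioo (0 : ℝ) 1)
    (ε ε₁ ε₂ : ℝ) (hε : 0 < ε) (hε₁ : 0 < ε₁) (hε₂ : 0 < ε₂) (hεsum : ε₁ + ε₂ < ε)
    (hNlarge : ((n : ℝ) * N) / ((n : ℝ) + N) >
      (-(1 / 2) * Real.log (α / 2)) / (ε - ε₁ - ε₂) ^ 2) :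
    (Pr {ω | ∃ i : Fin m,
        ε < (⨆ x : ℝ, |(ν i (Set.Iic x)).toReal - (μ (Set.Iic x)).toReal|) ∧
        (⨆ x : ℝ, |ecdfFin (Y i) ω x - ecdfFin X ω x|) ≤
          Real.sqrt (((n : ℝ) + N) / ((n : ℝ) * N)) *
            Real.sqrt (-(1 / 2) * Real.log (α / 2))}).toReal
      ≤ 2 * m * (Real.exp (-2 * n * ε₁ ^ 2) + Real.exp (-2 * N * ε₂ ^ 2)) :=
  stmt_9_general Pr μ hN0 hn0 ν X Y hXm hYm hindep hX hY α ε ε₁ ε₂ hε₁ hε₂ hεsum hNlarge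
end

section
/- Let 𝓔̂_m^v = { θ_i : sup_{x∈ℝ} |F_n^{θ_i}(x) − F_N^{θ₀}(x)| ≤ √((n+N)/(nN)) · √(−(1/2)log(α/2)) } be the two-sample eligibility set constructed from an i.i.d. real sample of size N from F^{θ₀}, independent i.i.d. simulated samples of size n from each F^{θ_i}, and candidates θ₁,…,θ_m. If log m = o(N) and n = Ω(N) as N → ∞, then for any ε > 0, lim_{m,n,N→∞} ℙ( ∃ i ∈ {1,…,m} such that sup_{x∈ℝ} |F^{θ_i}(x) − F^{θ₀}(x)| > ε and θ_i ∈ 𝓔̂_m^v ) = 0. -/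
/-!
Fix a candidate `i` whose CDF is at Kolmogorov distance more than `ε` from the true one, and pick
a point `x₀` where the two CDFs differ by more than `ε`. The threshold
`√((n + N)/(n N)) · √(-(1/2) log (α/2))` tends to `0`, so eventually it is below `ε / 2`; then
eligibility of `θᵢ` forces one of the two empirical CDFs to be `ε / 4` away from its CDF at `x₀`.
By Hoeffding's inequality this has probability at most `2 e^{-n ε²/8} + 2 e^{-N ε²/8}`, and a union
bound over the `m` candidates gives a bound that tends to `0` because `n ≥ c N` and
`log m = o(N)`.
-/

open MeasureTheory ProbabilityTheory Filter Real Topology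

/-- Empirical distribution function of the first `M` terms of a sequence of
real-valued random variables. -/
noncomputable def ecdfSeq {Ω : Type*} (Z : ℕ → Ω → ℝ) (M : ℕ) (ω : Ω) (x : ℝ) : ℝ :=
  (M : ℝ)⁻¹ * ∑ i ∈ Finset.range M, if Z i ω ≤ x then (1 : ℝ) else 0

lemma ecdfSeq_mem_Icc {Ω : Type*} (Z : ℕ → Ω → ℝ) (M : ℕ) (ω : Ω) (x : ℝ) :
    ecdfSeq Z M ω x ∈ Set.Icc (0 : ℝ) 1 := by
  rw [ecdfSeq, Finset.sum_boole, ← div_eq_inv_mul]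
  refine ⟨by positivity, div_le_one_of_le₀ ?_ M.cast_nonneg⟩
  exact_mod_cast (Finset.card_filter_le _ _).trans (Finset.card_range M).le

lemma bddAbove_range_abs_ecdfSeq_sub {Ω : Type*} (Z X : ℕ → Ω → ℝ) (n N : ℕ) (ω : Ω) :
    BddAbove (Set.range fun x ↦ |ecdfSeq Z n ω x - ecdfSeq X N ω x|) := by
  refine ⟨1, Set.forall_mem_range.mpr fun x ↦ abs_sub_le_iff.mpr ⟨?_, ?_⟩⟩ <;>
  · have := ecdfSeq_mem_Icc Z n ω x
    have := ecdfSeq_mem_Icc X N ω x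
    simp only [Set.mem_Icc] at *
    linarith

lemma sum_ite_le_sub_eq_mul_ecdfSeq_sub {Ω : Type*} {M : ℕ} (hM : 0 < M) (Z : ℕ → Ω → ℝ)
    (ω : Ω) (x p : ℝ) :
    ∑ j ∈ Finset.range M, ((if Z j ω ≤ x then (1 : ℝ) else 0) - p) =
      M * (ecdfSeq Z M ω x - p) := by
  rw [Finset.sum_sub_distrib, ecdfSeq, mul_sub, ← mul_assoc, mul_inv_cancel₀ (by positivity)]
  simp

lemma quarter_le_abs_sub_or_quarter_le_abs_sub {a b u v ε : ℝ} (hab : ε < |a - b|)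
    (huv : |u - v| < ε / 2) : ε / 4 ≤ |u - a| ∨ ε / 4 ≤ |v - b| := by
  by_contra! h
  linarith [abs_sub_le a u b, abs_sub_le u v b, abs_sub_comm a u]

section Probability

variable {Ω : Type*} [MeasurableSpace Ω] {P : Measure Ω}

lemma integral_ite_le_eq_toReal_Iic {Z : ℕ → Ω → ℝ} (hZm : ∀ j, Measurable (Z j))
    {ρ : Measure ℝ} (hZρ : ∀ j, P.map (Z j) = ρ) (x : ℝ) (j : ℕ) :
    P[fun ω ↦ if Z j ω ≤ x then (1 : ℝ) else 0] = (ρ (Set.Iic x)).toReal := by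
  have : (fun ω ↦ if Z j ω ≤ x then (1 : ℝ) else 0) = (Z j ⁻¹' Set.Iic x).indicator 1 := by
    ext ω; by_cases h : Z j ω ≤ x <;> simp [h]
  rw [this, integral_indicator_one ((hZm j) measurableSet_Iic), ← hZρ j,
    Measure.map_apply (hZm j) measurableSet_Iic, measureReal_def]

lemma measureReal_exists_lt_le_mul [IsFiniteMeasure P] {p : ℕ → Ω → Prop} {b : ℝ}
    (hp : ∀ i, P.real {ω | p i ω} ≤ b) (m : ℕ) :
    P.real {ω | ∃ i < m, p i ω} ≤ m * b := by
  have : {ω | ∃ i < m, p i ω} = ⋃ i ∈ Finset.range m, {ω | p i ω} := by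
    ext ω; simp
  rw [this]
  refine (measureReal_biUnion_finset_le _ _).trans ?_
  simpa using Finset.sum_le_sum fun i (_ : i ∈ Finset.range m) ↦ hp i

variable [IsProbabilityMeasure P]

lemma measureReal_le_abs_sum_sub_integral_le_of_mem_Icc {X : ℕ → Ω → ℝ} (hX : iIndepFun X P)
    (hXm : ∀ j, Measurable (X j)) (hX01 : ∀ j ω, X j ω ∈ Set.Icc (0 : ℝ) 1)
    (M : ℕ) {ε : ℝ} (hε : 0 ≤ ε) :
    P.real {ω | ε ≤ |∑ j ∈ Finset.range M, (X j ω - P[X j])|} ≤ 2 * exp (-2 * ε ^ 2 / M) := by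
  have hsub : ∀ j, HasSubgaussianMGF (fun ω ↦ X j ω - P[X j]) (1 / 4) P := fun j ↦ by
    have := hasSubgaussianMGF_of_mem_Icc (μ := P) (hXm j).aemeasurable (ae_of_all _ (hX01 j))
    convert this using 1
    norm_num
  have hcent : iIndepFun (fun j ω ↦ X j ω - P[X j]) P :=
    hX.comp (fun j (x : ℝ) ↦ x - ∫ ω, X j ω ∂P) fun _ ↦ measurable_id.sub_const _
  have hneg : iIndepFun (fun j ω ↦ -(X j ω - P[X j])) P :=
    hcent.comp (fun _ (x : ℝ) ↦ -x) (fun _ ↦ by fun_prop)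
  have hupper := HasSubgaussianMGF.measure_sum_range_ge_le_of_iIndepFun hcent
    (fun j _ ↦ hsub j) (n := M) hε
  have hlower := HasSubgaussianMGF.measure_sum_range_ge_le_of_iIndepFun hneg
    (fun j _ ↦ (hsub j).neg) (n := M) hε
  have hexp : -ε ^ 2 / (2 * M * ((1 : NNReal) / 4 : NNReal)) = -2 * ε ^ 2 / M := by
    push_cast; ring
  rw [hexp] at hupper hlower
  calc P.real {ω | ε ≤ |∑ j ∈ Finset.range M, (X j ω - P[X j])|}
      ≤ P.real ({ω | ε ≤ ∑ j ∈ Finset.range M, (X j ω - P[X j])} ∪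
          {ω | ε ≤ ∑ j ∈ Finset.range M, -(X j ω - P[X j])}) := by
        refine measureReal_mono fun ω hω ↦ ?_
        simp only [Set.mem_ofPred_eq, Set.mem_union, Finset.sum_neg_distrib] at hω ⊢
        rcases le_abs'.mp hω with h | h
        · exact Or.inr (by linarith)
        · exact Or.inl h
    _ ≤ 2 * exp (-2 * ε ^ 2 / M) := (measureReal_union_le _ _).trans (by linarith)

lemma measureReal_le_abs_ecdfSeq_sub_le {Z : ℕ → Ω → ℝ} (hZ : iIndepFun Z P)
    (hZm : ∀ j, Measurable (Z j)) {ρ : Measure ℝ} (hZρ : ∀ j, P.map (Z j) = ρ)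
    (x : ℝ) (M : ℕ) {δ : ℝ} (hδ : 0 ≤ δ) :
    P.real {ω | δ ≤ |ecdfSeq Z M ω x - (ρ (Set.Iic x)).toReal|} ≤ 2 * exp (-2 * M * δ ^ 2) := by
  rcases M.eq_zero_or_pos with rfl | hM
  · simpa using measureReal_le_one.trans one_le_two
  set B : ℕ → Ω → ℝ := fun j ω ↦ if Z j ω ≤ x then 1 else 0
  have hB : iIndepFun B P :=
    hZ.comp (fun _ (z : ℝ) ↦ if z ≤ x then (1 : ℝ) else 0)
      fun _ ↦ Measurable.ite measurableSet_Iic measurable_const measurable_const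
  have hBm : ∀ j, Measurable (B j) :=
    fun j ↦ Measurable.ite (measurableSet_le (hZm j) measurable_const) measurable_const
      measurable_const
  have hB01 : ∀ j ω, B j ω ∈ Set.Icc (0 : ℝ) 1 := fun j ω ↦ by
    by_cases h : Z j ω ≤ x <;> simp [B, h]
  have hbound := measureReal_le_abs_sum_sub_integral_le_of_mem_Icc hB hBm hB01 M
    (by positivity : 0 ≤ (M : ℝ) * δ)
  simp only [B, integral_ite_le_eq_toReal_Iic hZm hZρ, sum_ite_le_sub_eq_mul_ecdfSeq_sub hM,
    abs_mul, Nat.abs_cast] at hbound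
  have hMpos : (0 : ℝ) < M := by exact_mod_cast hM
  calc P.real {ω | δ ≤ |ecdfSeq Z M ω x - (ρ (Set.Iic x)).toReal|}
      = P.real {ω | M * δ ≤ M * |ecdfSeq Z M ω x - (ρ (Set.Iic x)).toReal|} := by
        simp only [mul_le_mul_iff_right₀ hMpos]
    _ ≤ 2 * exp (-2 * M * δ ^ 2) := by
        convert hbound using 3
        field_simp

lemma measureReal_cdf_far_and_ecdf_close_le {X Z : ℕ → Ω → ℝ}
    (hX : iIndepFun X P) (hXm : ∀ k, Measurable (X k)) {μ : Measure ℝ}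
    (hXμ : ∀ k, P.map (X k) = μ)
    (hZ : iIndepFun Z P) (hZm : ∀ j, Measurable (Z j)) {ρ : Measure ℝ}
    (hZρ : ∀ j, P.map (Z j) = ρ)
    {ε t : ℝ} (hε : 0 < ε) (ht : t < ε / 2) (n N : ℕ) :
    P.real {ω | ε < (⨆ x : ℝ, |(ρ (Set.Iic x)).toReal - (μ (Set.Iic x)).toReal|) ∧
        (⨆ x : ℝ, |ecdfSeq Z n ω x - ecdfSeq X N ω x|) ≤ t} ≤
      2 * exp (-2 * n * (ε / 4) ^ 2) + 2 * exp (-2 * N * (ε / 4) ^ 2) := by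
  by_cases hfar : ε < ⨆ x : ℝ, |(ρ (Set.Iic x)).toReal - (μ (Set.Iic x)).toReal|
  · -- `x₀` does not depend on `ω`, so Hoeffding's inequality applies at the fixed point `x₀`.
    obtain ⟨x₀, hx₀⟩ := exists_lt_of_lt_ciSup hfar
    have hsub : {ω | ε < (⨆ x : ℝ, |(ρ (Set.Iic x)).toReal - (μ (Set.Iic x)).toReal|) ∧
        (⨆ x : ℝ, |ecdfSeq Z n ω x - ecdfSeq X N ω x|) ≤ t} ⊆
        {ω | ε / 4 ≤ |ecdfSeq Z n ω x₀ - (ρ (Set.Iic x₀)).toReal|} ∪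
          {ω | ε / 4 ≤ |ecdfSeq X N ω x₀ - (μ (Set.Iic x₀)).toReal|} := by
      rintro ω ⟨-, hclose⟩
      exact quarter_le_abs_sub_or_quarter_le_abs_sub hx₀
        (((le_ciSup (bddAbove_range_abs_ecdfSeq_sub Z X n N ω) x₀).trans hclose).trans_lt ht)
    have hδ : 0 ≤ ε / 4 := by positivity
    calc _ ≤ _ := measureReal_mono hsub
      _ ≤ _ := measureReal_union_le _ _
      _ ≤ _ := add_le_add (measureReal_le_abs_ecdfSeq_sub_le hZ hZm hZρ x₀ n hδ)
                (measureReal_le_abs_ecdfSeq_sub_le hX hXm hXμ x₀ N hδ)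
  · simp only [hfar, false_and, Set.ofPred_false, measureReal_empty]
    positivity

end Probability

lemma tendsto_natCast_mul_exp_neg_mul_nhds_zero {m : ℕ → ℕ}
    (hlog : Tendsto (fun N : ℕ ↦ log (m N) / N) atTop (𝓝 0)) {a : ℝ} (ha : 0 < a) :
    Tendsto (fun N : ℕ ↦ (m N : ℝ) * exp (-a * N)) atTop (𝓝 0) := by
  have hexponent : Tendsto (fun N : ℕ ↦ N * (log (m N) / N - a)) atTop atBot :=
    Tendsto.atTop_mul_neg (by linarith : -a < 0) tendsto_natCast_atTop_atTop
      (by simpa using hlog.sub_const a)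
  refine squeeze_zero' (.of_forall fun N ↦ by positivity) ?_ (tendsto_exp_atBot.comp hexponent)
  filter_upwards [eventually_ge_atTop 1] with N hN
  have hN : (N : ℝ) ≠ 0 := by positivity
  calc (m N : ℝ) * exp (-a * N) ≤ exp (log (m N)) * exp (-a * N) := by
        gcongr; exact le_exp_log _
    _ = exp (N * (log (m N) / N - a)) := by
        rw [← exp_add]; congr 1; field_simp; ring

lemma tendsto_sqrt_add_div_mul_mul_const_nhds_zero {n : ℕ → ℕ} (hn : Tendsto n atTop atTop)
    (K : ℝ) : Tendsto (fun N : ℕ ↦ sqrt ((n N + N) / (n N * N)) * K) atTop (𝓝 0) := by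
  have hinv : Tendsto (fun N : ℕ ↦ ((n N : ℝ))⁻¹ + (N : ℝ)⁻¹) atTop (𝓝 0) := by
    simpa using ((tendsto_natCast_atTop_atTop (R := ℝ)).comp hn).inv_tendsto_atTop.add
      tendsto_inv_atTop_nhds_zero_nat
  have hfrac : Tendsto (fun N : ℕ ↦ ((n N : ℝ) + N) / (n N * N)) atTop (𝓝 0) := by
    refine hinv.congr' ?_
    filter_upwards [hn.eventually_ge_atTop 1, eventually_ge_atTop 1] with N hn1 hN1
    have : (n N : ℝ) ≠ 0 := by positivity
    have : (N : ℝ) ≠ 0 := by positivity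
    field_simp; ring
  simpa using ((continuous_sqrt.tendsto 0).comp hfrac).mul_const K

theorem stmt_10_general
    {Ω : Type*} [MeasurableSpace Ω] (Pr : Measure Ω) [IsProbabilityMeasure Pr]
    (μ : Measure ℝ)
    (ν : ℕ → Measure ℝ)
    (X : ℕ → Ω → ℝ) (Y : ℕ → ℕ → Ω → ℝ)
    (hXm : ∀ i, Measurable (X i)) (hYm : ∀ i j, Measurable (Y i j))
    (hindep : iIndepFun
      (Sum.elim X (fun p : ℕ × ℕ => Y p.1 p.2)) Pr)
    (hX : ∀ k, Measure.map (X k) Pr = μ) (hY : ∀ i j, Measure.map (Y i j) Pr = ν i)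
    (α : ℝ)
    (m n : ℕ → ℕ)
    (hn : Tendsto n atTop atTop)
    -- `log m = o(N)`
    (hlogm : Tendsto (fun N => Real.log (m N) / (N : ℝ)) atTop (nhds 0))
    -- `n = Ω(N)`
    (hnN : ∃ c > (0 : ℝ), ∀ᶠ N : ℕ in atTop, c * (N : ℝ) ≤ (n N : ℝ))
    (ε : ℝ) (hε : 0 < ε) :
    Tendsto (fun N =>
      (Pr {ω | ∃ i < m N,
        ε < (⨆ x : ℝ, |(ν i (Set.Iic x)).toReal - (μ (Set.Iic x)).toReal|) ∧
        (⨆ x : ℝ, |ecdfSeq (Y i) (n N) ω x - ecdfSeq X N ω x|) ≤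
          Real.sqrt (((n N : ℝ) + N) / ((n N : ℝ) * N)) *
            Real.sqrt (-(1 / 2) * Real.log (α / 2))}).toReal)
      atTop (nhds 0) := by
  obtain ⟨c, hc, hcn⟩ := hnN
  have hXindep : iIndepFun X Pr := (hindep.precomp Sum.inl_injective :)
  have hYindep (i : ℕ) : iIndepFun (Y i) Pr :=
    (hindep.precomp (g := fun j ↦ Sum.inr (i, j)) fun _ _ h ↦ by simpa using h :)
  have hthreshold := (tendsto_sqrt_add_div_mul_mul_const_nhds_zero hn
    (sqrt (-(1 / 2) * log (α / 2)))).eventually_lt_const (half_pos hε)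
  have hlimit : Tendsto (fun N : ℕ ↦ 2 * (m N * exp (-(2 * c * (ε / 4) ^ 2) * N)) +
      2 * (m N * exp (-(2 * (ε / 4) ^ 2) * N))) atTop (𝓝 0) := by
    simpa using
      ((tendsto_natCast_mul_exp_neg_mul_nhds_zero hlogm (by positivity)).const_mul 2).add
        ((tendsto_natCast_mul_exp_neg_mul_nhds_zero hlogm (by positivity)).const_mul 2)
  refine squeeze_zero' (.of_forall fun N ↦ ENNReal.toReal_nonneg) ?_ hlimit
  filter_upwards [hthreshold, hcn] with N hthresholdN hcnN
  refine (measureReal_exists_lt_le_mul (fun i ↦ measureReal_cdf_far_and_ecdf_close_le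
    hXindep hXm hX (hYindep i) (hYm i) (hY i) hε hthresholdN (n N) N) (m N)).trans ?_
  have hexp : exp (-2 * n N * (ε / 4) ^ 2) ≤ exp (-(2 * c * (ε / 4) ^ 2) * N) :=
    exp_le_exp.mpr (by nlinarith [mul_le_mul_of_nonneg_right hcnN (sq_nonneg (ε / 4))])
  have := mul_le_mul_of_nonneg_left hexp (m N).cast_nonneg
  rw [show -2 * (N : ℝ) * (ε / 4) ^ 2 = -(2 * (ε / 4) ^ 2) * N by ring]
  linarith

/-- **Corollary 1.** If `log m = o(N)` and `n = Ω(N)`, then for any `ε > 0` the probability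
that some candidate `θᵢ` with `sup_x |F^{θᵢ}(x) - F^{θ₀}(x)| > ε` lies in the eligibility
set `𝓔̂_m^v` tends to `0` as `m, n, N → ∞`. -/
theorem stmt_10
    {Ω : Type*} [MeasurableSpace Ω] (Pr : Measure Ω) [IsProbabilityMeasure Pr]
    (μ : Measure ℝ) [IsProbabilityMeasure μ]
    (ν : ℕ → Measure ℝ) [∀ i, IsProbabilityMeasure (ν i)]
    (X : ℕ → Ω → ℝ) (Y : ℕ → ℕ → Ω → ℝ)
    (hXm : ∀ i, Measurable (X i)) (hYm : ∀ i j, Measurable (Y i j))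
    (hindep : iIndepFun
      (Sum.elim X (fun p : ℕ × ℕ => Y p.1 p.2)) Pr)
    (hX : ∀ k, Measure.map (X k) Pr = μ) (hY : ∀ i j, Measure.map (Y i j) Pr = ν i)
    (α : ℝ) (hα : α ∈ Set.Ioo (0 : ℝ) 1)
    (m n : ℕ → ℕ)
    (hm : Tendsto m atTop atTop) (hn : Tendsto n atTop atTop)
    -- `log m = o(N)`
    (hlogm : Tendsto (fun N => Real.log (m N) / (N : ℝ)) atTop (nhds 0))
    -- `n = Ω(N)`
    (hnN : ∃ c > (0 : ℝ), ∀ᶠ N : ℕ in atTop, c * (N : ℝ) ≤ (n N : ℝ))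
    (ε : ℝ) (hε : 0 < ε) :
    Tendsto (fun N =>
      (Pr {ω | ∃ i < m N,
        ε < (⨆ x : ℝ, |(ν i (Set.Iic x)).toReal - (μ (Set.Iic x)).toReal|) ∧
        (⨆ x : ℝ, |ecdfSeq (Y i) (n N) ω x - ecdfSeq X N ω x|) ≤
          Real.sqrt (((n N : ℝ) + N) / ((n N : ℝ) * N)) *
            Real.sqrt (-(1 / 2) * Real.log (α / 2))}).toReal)
      atTop (nhds 0) :=
  stmt_10_general Pr μ ν X Y hXm hYm hindep hX hY α m n hn hlogm hnN ε hε
end
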